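/- arXiv:cs/0207024 — 4 statements merged into one kernel-verified Lean document; each statement's English description precedes it below -/
import Mathlib

section
/- For every truth assignment α to x_1, …, x_{n+2} that satisfies Ψ, the set S_α = {Ψ} ∪ {x_i : α(x_i) = ⊤, 1 ≤ i ≤ n+2} ∪ {x̄_i : α(x_i) = ⊥, 1 ≤ i ≤ n+2} is a stable extension of the argument system H_Ψ. -/
/-- `att y x` means "y attacks x". `S` is conflict-free if no argument in `S`
attacks an argument in `S`. -/
def conflictFree {V : Type*} (att : V → V → Prop) (S : Set V) : Prop :=
  ∀ x ∈ S, ∀ y ∈ S, ¬ att y x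

/-- `x` is acceptable w.r.t. `S` if every attacker of `x` is attacked by some member of `S`. -/
def acceptable {V : Type*} (att : V → V → Prop) (S : Set V) (x : V) : Prop :=
  ∀ y, att y x → ∃ z ∈ S, att z y

/-- `S` is admissible if it is conflict-free and each member is acceptable w.r.t. `S`. -/
def admissible {V : Type*} (att : V → V → Prop) (S : Set V) : Prop :=
  conflictFree att S ∧ ∀ x ∈ S, acceptable att S x

/-- A preferred extension is a ⊆-maximal admissible set. -/
def preferredExt {V : Type*} (att : V → V → Prop) (S : Set V) : Prop :=
  admissible att S ∧ ∀ T, admissible att T → S ⊆ T → S = T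

/-- A stable extension is a conflict-free set attacking every outside argument. -/
def stableExt {V : Type*} (att : V → V → Prop) (S : Set V) : Prop :=
  conflictFree att S ∧ ∀ y, y ∉ S → ∃ z ∈ S, att z y

/-- A 3-CNF over variables `Fin n` is given by `C : Fin m → Fin 3 → Fin n × Bool`,
where literal `(k, true)` is `x_k` and `(k, false)` is `¬x_k`.
`PhiSat C α` says the assignment `α` satisfies `Φ = ∧_i C_i`. -/
def PhiSat {n m : ℕ} (C : Fin m → Fin 3 → Fin n × Bool) (α : Fin n → Bool) : Prop :=
  ∀ i : Fin m, ∃ j : Fin 3, α (C i j).1 = (C i j).2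

/-- The new variable `x_{n+1}` as an element of `Fin (n+2)`. -/
def vn1 (n : ℕ) : Fin (n + 2) := ⟨n, by omega⟩

/-- The new variable `x_{n+2}` as an element of `Fin (n+2)`. -/
def vn2 (n : ℕ) : Fin (n + 2) := ⟨n + 1, by omega⟩

/-- `PsiSat C α` says `α : Fin (n+2) → Bool` satisfies
`Ψ = ∧_i (C_i ∨ ¬x_{n+1} ∨ x_{n+2}) ∧ (C_i ∨ x_{n+1} ∨ ¬x_{n+2})`. -/
def PsiSat {n m : ℕ} (C : Fin m → Fin 3 → Fin n × Bool) (α : Fin (n + 2) → Bool) : Prop :=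
  ∀ i : Fin m,
    ((∃ j : Fin 3, α (Fin.castAdd 2 (C i j).1) = (C i j).2) ∨
       α (vn1 n) = false ∨ α (vn2 n) = true) ∧
    ((∃ j : Fin 3, α (Fin.castAdd 2 (C i j).1) = (C i j).2) ∨
       α (vn1 n) = true ∨ α (vn2 n) = false)

/-- The arguments of the system `H_Ψ`: the argument `Ψ`, the argument `χ`,
literal arguments `x_i` (`pos i`) and `x̄_i` (`neg i`) for `1 ≤ i ≤ n+2`, and
clause arguments `C_j^(1)` (`c1 j`) and `C_j^(2)` (`c2 j`) for `1 ≤ j ≤ m`. -/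
inductive Arg (n m : ℕ) : Type where
  | psi : Arg n m
  | chi : Arg n m
  | pos : Fin (n + 2) → Arg n m
  | neg : Fin (n + 2) → Arg n m
  | c1 : Fin m → Arg n m
  | c2 : Fin m → Arg n m

/-- The literal argument corresponding to a literal: `x_k` for `(k, true)`,
`x̄_k` for `(k, false)`. -/
def litArg {n m : ℕ} (l : Fin n × Bool) : Arg n m :=
  if l.2 then Arg.pos (Fin.castAdd 2 l.1) else Arg.neg (Fin.castAdd 2 l.1)

/-- The attack relation of `H_Ψ`: `attPsi C a b` means `a` attacks `b`. -/
inductive attPsi {n m : ℕ} (C : Fin m → Fin 3 → Fin n × Bool) : Arg n m → Arg n m → Prop where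
  | posNeg (i : Fin (n + 2)) : attPsi C (.pos i) (.neg i)
  | negPos (i : Fin (n + 2)) : attPsi C (.neg i) (.pos i)
  | chiPos (i : Fin n) : attPsi C .chi (.pos (Fin.castAdd 2 i))
  | chiNeg (i : Fin n) : attPsi C .chi (.neg (Fin.castAdd 2 i))
  | litC1 (i : Fin m) (j : Fin 3) : attPsi C (litArg (C i j)) (.c1 i)
  | litC2 (i : Fin m) (j : Fin 3) : attPsi C (litArg (C i j)) (.c2 i)
  | c1Psi (i : Fin m) : attPsi C (.c1 i) .psi
  | c2Psi (i : Fin m) : attPsi C (.c2 i) .psi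
  | negN1C1 (i : Fin m) : attPsi C (.neg (vn1 n)) (.c1 i)
  | posN2C1 (i : Fin m) : attPsi C (.pos (vn2 n)) (.c1 i)
  | posN1C2 (i : Fin m) : attPsi C (.pos (vn1 n)) (.c2 i)
  | negN2C2 (i : Fin m) : attPsi C (.neg (vn2 n)) (.c2 i)
  | psiChi : attPsi C .psi .chi

/-- The set `S_α = {Ψ} ∪ {x_i : α(x_i) = ⊤} ∪ {x̄_i : α(x_i) = ⊥}`. -/
def Salpha {n m : ℕ} (α : Fin (n + 2) → Bool) : Set (Arg n m) :=
  fun a =>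
    match a with
    | .psi => True
    | .pos i => α i = true
    | .neg i => α i = false
    | _ => False

/-- Every satisfying assignment `α` of `Ψ` induces a stable extension `S_α` of `H_Ψ`. -/
theorem stmt_8 (n m : ℕ) (hn : 1 ≤ n) (hm : 1 ≤ m)
    (C : Fin m → Fin 3 → Fin n × Bool) (α : Fin (n + 2) → Bool)
    (hα : PsiSat C α) :
    stableExt (attPsi C) (Salpha (n := n) (m := m) α) := by
  constructor
  · intro x hx y hy hatt
    cases hatt with
    | posNeg i =>
      have h1 : α i = false := hx
      have h2 : α i = true := hy
      simp [h1] at h2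
    | negPos i =>
      have h1 : α i = true := hx
      have h2 : α i = false := hy
      simp [h1] at h2
    | chiPos i => exact hy
    | chiNeg i => exact hy
    | litC1 i j => exact hx
    | litC2 i j => exact hx
    | c1Psi i => exact hy
    | c2Psi i => exact hy
    | negN1C1 i => exact hx
    | posN2C1 i => exact hx
    | posN1C2 i => exact hx
    | negN2C2 i => exact hx
    | psiChi => exact hx
  · intro y hy
    cases y with
    | psi => exact absurd trivial hy
    | chi => exact ⟨.psi, trivial, .psiChi⟩
    | pos i =>
      have : α i = false := by
        have : ¬ (α i = true) := hy
        exact Bool.eq_false_iff.mpr this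
      exact ⟨.neg i, this, .negPos i⟩
    | neg i =>
      have : α i = true := by
        have : ¬ (α i = false) := hy
        cases h : α i
        · exact absurd h this
        · rfl
      exact ⟨.pos i, this, .posNeg i⟩
    | c1 i =>
      rcases (hα i).1 with ⟨j, hj⟩ | h | h
      · refine ⟨litArg (C i j), ?_, .litC1 i j⟩
        unfold litArg
        cases hb : (C i j).2
        · rw [hb] at hj
          simp only [hb, Bool.false_eq_true, if_false]
          exact show α (Fin.castAdd 2 (C i j).1) = false from hj
        · rw [hb] at hj
          simp only [hb, if_true]
          exact show α (Fin.castAdd 2 (C i j).1) = true from hj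
      · exact ⟨.neg (vn1 n), h, .negN1C1 i⟩
      · exact ⟨.pos (vn2 n), h, .posN2C1 i⟩
    | c2 i =>
      rcases (hα i).2 with ⟨j, hj⟩ | h | h
      · refine ⟨litArg (C i j), ?_, .litC2 i j⟩
        unfold litArg
        cases hb : (C i j).2
        · rw [hb] at hj
          simp only [hb, Bool.false_eq_true, if_false]
          exact show α (Fin.castAdd 2 (C i j).1) = false from hj
        · rw [hb] at hj
          simp only [hb, if_true]
          exact show α (Fin.castAdd 2 (C i j).1) = true from hj
      · exact ⟨.pos (vn1 n), h, .posN1C2 i⟩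
      · exact ⟨.neg (vn2 n), h, .negN2C2 i⟩
end

section
/- For every truth assignment α to x_1, …, x_{n+2} that satisfies Ψ, the set S_α = {Ψ} ∪ {x_i : α(x_i) = ⊤, 1 ≤ i ≤ n+2} ∪ {x̄_i : α(x_i) = ⊥, 1 ≤ i ≤ n+2} is a preferred extension of the argument system H_Ψ. -/
/-! `S_α` is in fact a stable extension: `Ψ` attacks `χ`, each literal argument outside `S_α`
is attacked by its complement, and since `α` satisfies both copies of every clause, each
`C_i^(1)` and `C_i^(2)` is attacked by a true literal of `C_i` or by the true one of
`x_{n+1}, x̄_{n+1}, x_{n+2}, x̄_{n+2}`. Stable extensions are always preferred. -/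

section Dung

variable {V : Type*} {att : V → V → Prop} {S : Set V}

theorem admissible_of_stableExt (hS : stableExt att S) : admissible att S :=
  ⟨hS.1, fun x hx y hyx => hS.2 y fun hy => hS.1 x hx y hy hyx⟩

theorem preferredExt_of_stableExt (hS : stableExt att S) : preferredExt att S := by
  refine ⟨admissible_of_stableExt hS, fun T hT hST => hST.antisymm fun y hyT => ?_⟩
  by_contra hyS
  obtain ⟨z, hzS, hzy⟩ := hS.2 y hyS
  exact hT.1 y hyT z (hST hzS) hzy

end Dung

section Salpha

variable {n m : ℕ} {α : Fin (n + 2) → Bool}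

@[simp] theorem psi_mem_Salpha : (Arg.psi : Arg n m) ∈ Salpha α := trivial

@[simp] theorem chi_not_mem_Salpha : (Arg.chi : Arg n m) ∉ Salpha α := id

@[simp] theorem c1_not_mem_Salpha (i : Fin m) : (Arg.c1 i : Arg n m) ∉ Salpha α := id

@[simp] theorem c2_not_mem_Salpha (i : Fin m) : (Arg.c2 i : Arg n m) ∉ Salpha α := id

@[simp] theorem pos_mem_Salpha (i : Fin (n + 2)) :
    (Arg.pos i : Arg n m) ∈ Salpha α ↔ α i = true := Iff.rfl

@[simp] theorem neg_mem_Salpha (i : Fin (n + 2)) :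
    (Arg.neg i : Arg n m) ∈ Salpha α ↔ α i = false := Iff.rfl

theorem litArg_mem_Salpha {l : Fin n × Bool} (h : α (Fin.castAdd 2 l.1) = l.2) :
    litArg (m := m) l ∈ Salpha α := by
  obtain ⟨k, _ | _⟩ := l <;> simpa [litArg] using h

variable {C : Fin m → Fin 3 → Fin n × Bool}

theorem Salpha_conflictFree : conflictFree (attPsi C) (Salpha (m := m) α) := by
  intro x hx y hy hyx
  cases hyx <;> simp_all

theorem exists_mem_Salpha_attPsi_c1 (hα : PsiSat C α) (i : Fin m) :
    ∃ z ∈ Salpha α, attPsi C z (.c1 i) := by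
  rcases (hα i).1 with ⟨j, hj⟩ | h | h
  · exact ⟨_, litArg_mem_Salpha hj, .litC1 i j⟩
  · exact ⟨_, (neg_mem_Salpha _).2 h, .negN1C1 i⟩
  · exact ⟨_, (pos_mem_Salpha _).2 h, .posN2C1 i⟩

theorem exists_mem_Salpha_attPsi_c2 (hα : PsiSat C α) (i : Fin m) :
    ∃ z ∈ Salpha α, attPsi C z (.c2 i) := by
  rcases (hα i).2 with ⟨j, hj⟩ | h | h
  · exact ⟨_, litArg_mem_Salpha hj, .litC2 i j⟩
  · exact ⟨_, (pos_mem_Salpha _).2 h, .posN1C2 i⟩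
  · exact ⟨_, (neg_mem_Salpha _).2 h, .negN2C2 i⟩

theorem Salpha_stableExt (hα : PsiSat C α) : stableExt (attPsi C) (Salpha α) := by
  refine ⟨Salpha_conflictFree, fun y hy => ?_⟩
  cases y with
  | psi => exact absurd psi_mem_Salpha hy
  | chi => exact ⟨.psi, psi_mem_Salpha, .psiChi⟩
  | pos i => exact ⟨.neg i, by simpa using hy, .negPos i⟩
  | neg i => exact ⟨.pos i, by simpa using hy, .posNeg i⟩
  | c1 i => exact exists_mem_Salpha_attPsi_c1 hα i
  | c2 i => exact exists_mem_Salpha_attPsi_c2 hα i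

end Salpha

theorem stmt_9_general (n m : ℕ)
    (C : Fin m → Fin 3 → Fin n × Bool) (α : Fin (n + 2) → Bool)
    (hα : PsiSat C α) :
    preferredExt (attPsi C) (Salpha (n := n) (m := m) α) :=
  preferredExt_of_stableExt (Salpha_stableExt hα)

/-- Every satisfying assignment `α` of `Ψ` induces a preferred extension `S_α` of `H_Ψ`. -/
theorem stmt_9 (n m : ℕ) (hn : 1 ≤ n) (hm : 1 ≤ m)
    (C : Fin m → Fin 3 → Fin n × Bool) (α : Fin (n + 2) → Bool)
    (hα : PsiSat C α) :
    preferredExt (attPsi C) (Salpha (n := n) (m := m) α) :=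
  stmt_9_general n m C α hα
end

section
/- In the argument system H_Ψ, the argument Ψ and every literal argument x_i and x̄_i (for 1 ≤ i ≤ n+2) is credulously accepted, i.e., each of these arguments belongs to some preferred extension of H_Ψ. -/
theorem stable_pref {V : Type*} (att : V → V → Prop) (S : Set V)
    (h : stableExt att S) : preferredExt att S := by
  obtain ⟨hcf, hst⟩ := h
  refine ⟨⟨hcf, ?_⟩, ?_⟩
  · intro x hx y hy
    by_cases hyS : y ∈ S
    · exact absurd hy (hcf x hx y hyS)
    · exact hst y hyS
  · intro T hT hsub
    refine Set.Subset.antisymm hsub ?_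
    intro x hxT
    by_contra hxS
    obtain ⟨z, hzS, hzx⟩ := hst x hxS
    exact hT.1 x hxT z (hsub hzS) hzx

@[simp] lemma mem_salpha_psi {n m : ℕ} (α : Fin (n + 2) → Bool) :
    (Arg.psi ∈ Salpha (m := m) α) ↔ True := Iff.rfl
@[simp] lemma mem_salpha_chi {n m : ℕ} (α : Fin (n + 2) → Bool) :
    (Arg.chi ∈ Salpha (m := m) α) ↔ False := Iff.rfl
@[simp] lemma mem_salpha_pos {n m : ℕ} (α : Fin (n + 2) → Bool) (i : Fin (n + 2)) :
    (Arg.pos i ∈ Salpha (m := m) α) ↔ α i = true := Iff.rfl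
@[simp] lemma mem_salpha_neg {n m : ℕ} (α : Fin (n + 2) → Bool) (i : Fin (n + 2)) :
    (Arg.neg i ∈ Salpha (m := m) α) ↔ α i = false := Iff.rfl
@[simp] lemma mem_salpha_c1 {n m : ℕ} (α : Fin (n + 2) → Bool) (i : Fin m) :
    (Arg.c1 i ∈ Salpha (m := m) α) ↔ False := Iff.rfl
@[simp] lemma mem_salpha_c2 {n m : ℕ} (α : Fin (n + 2) → Bool) (i : Fin m) :
    (Arg.c2 i ∈ Salpha (m := m) α) ↔ False := Iff.rfl

theorem salpha_stable {n m : ℕ} (C : Fin m → Fin 3 → Fin n × Bool)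
    (α : Fin (n + 2) → Bool) (h : α (vn1 n) = α (vn2 n)) :
    stableExt (attPsi C) (Salpha (m := m) α) := by
  constructor
  · intro x hx y hy hatt
    cases hatt <;> simp_all
  · intro y hy
    match y with
    | .psi => exact absurd trivial hy
    | .chi => exact ⟨.psi, trivial, .psiChi⟩
    | .pos i =>
      refine ⟨.neg i, ?_, .negPos i⟩
      simp only [mem_salpha_pos] at hy
      simpa using hy
    | .neg i =>
      refine ⟨.pos i, ?_, .posNeg i⟩
      simp only [mem_salpha_neg] at hy
      simpa using hy
    | .c1 i =>
      cases hv : α (vn1 n) with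
      | false => exact ⟨.neg (vn1 n), hv, .negN1C1 i⟩
      | true => exact ⟨.pos (vn2 n), by rw [mem_salpha_pos, ← h]; exact hv, .posN2C1 i⟩
    | .c2 i =>
      cases hv : α (vn2 n) with
      | false => exact ⟨.neg (vn2 n), hv, .negN2C2 i⟩
      | true => exact ⟨.pos (vn1 n), by rw [mem_salpha_pos, h]; exact hv, .posN1C2 i⟩

/-- In `H_Ψ`, the argument `Ψ` and every literal argument `x_i`, `x̄_i`
(`1 ≤ i ≤ n+2`) is credulously accepted, i.e. belongs to some preferred
extension of `H_Ψ`. -/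
theorem stmt_10 (n m : ℕ) (hn : 1 ≤ n) (hm : 1 ≤ m)
    (C : Fin m → Fin 3 → Fin n × Bool) :
    (∃ P : Set (Arg n m), preferredExt (attPsi C) P ∧ Arg.psi ∈ P) ∧
    (∀ i : Fin (n + 2),
      (∃ P : Set (Arg n m), preferredExt (attPsi C) P ∧ Arg.pos i ∈ P) ∧
      (∃ P : Set (Arg n m), preferredExt (attPsi C) P ∧ Arg.neg i ∈ P)) := by
  have key : ∀ (α : Fin (n + 2) → Bool), α (vn1 n) = α (vn2 n) →
      preferredExt (attPsi C) (Salpha (m := m) α) :=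
    fun α h => stable_pref _ _ (salpha_stable C α h)
  constructor
  · exact ⟨Salpha (fun _ => false), key _ rfl, trivial⟩
  · intro i
    set α : Fin (n + 2) → Bool := fun j => decide (j = i ∨ (n ≤ i.1 ∧ n ≤ j.1)) with hα
    have heq : α (vn1 n) = α (vn2 n) := by
      by_cases hni : n ≤ i.1 <;>
        simp [hα, vn1, vn2, hni, Fin.ext_iff] <;> omega
    constructor
    · exact ⟨Salpha α, key α heq, by rw [mem_salpha_pos]; simp [hα]⟩
    · refine ⟨Salpha (fun j => !(α j)), key _ (by rw [heq]), ?_⟩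
      rw [mem_salpha_neg]
      simp [hα]
end

section
/- If Φ is satisfiable, then the two-element set {x_{n+1}, x̄_{n+2}} is contained in some stable extension of the argument system H_Ψ. Concretely, if β is a satisfying assignment of Φ and α extends β by α(x_{n+1}) = ⊤ and α(x_{n+2}) = ⊥, then S_α = {Ψ} ∪ {x_i : α(x_i) = ⊤, 1 ≤ i ≤ n+2} ∪ {x̄_i : α(x_i) = ⊥, 1 ≤ i ≤ n+2} is a stable extension of H_Ψ containing {x_{n+1}, x̄_{n+2}}. -/
/-- Extend an assignment `β` of `x_1, …, x_n` to `x_1, …, x_{n+2}` by setting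
`x_{n+1} = ⊤` and `x_{n+2} = ⊥`. -/
def extendAssign {n : ℕ} (β : Fin n → Bool) : Fin (n + 2) → Bool :=
  fun i => if h : (i : ℕ) < n then β ⟨i, h⟩ else decide ((i : ℕ) = n)

lemma mem_psi {n m : ℕ} (α : Fin (n+2) → Bool) : (Arg.psi ∈ Salpha (m := m) α) ↔ True := Iff.rfl
lemma mem_chi {n m : ℕ} (α : Fin (n+2) → Bool) : (Arg.chi ∈ Salpha (m := m) α) ↔ False := Iff.rfl
lemma mem_pos {n m : ℕ} (α : Fin (n+2) → Bool) (i : Fin (n+2)) : (Arg.pos i ∈ Salpha (m := m) α) ↔ α i = true := Iff.rfl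
lemma mem_neg {n m : ℕ} (α : Fin (n+2) → Bool) (i : Fin (n+2)) : (Arg.neg i ∈ Salpha (m := m) α) ↔ α i = false := Iff.rfl
lemma mem_c1 {n m : ℕ} (α : Fin (n+2) → Bool) (i : Fin m) : (Arg.c1 i ∈ Salpha (m := m) α) ↔ False := Iff.rfl
lemma mem_c2 {n m : ℕ} (α : Fin (n+2) → Bool) (i : Fin m) : (Arg.c2 i ∈ Salpha (m := m) α) ↔ False := Iff.rfl

/-- If `Φ` is satisfiable then `{x_{n+1}, x̄_{n+2}}` is contained in some stable
extension of `H_Ψ`: concretely, if `β` satisfies `Φ` and `α` extends `β` by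
`α(x_{n+1}) = ⊤`, `α(x_{n+2}) = ⊥`, then `S_α` is a stable extension of `H_Ψ`
containing `{x_{n+1}, x̄_{n+2}}`. -/
theorem stmt_13 (n m : ℕ) (hn : 1 ≤ n) (hm : 1 ≤ m)
    (C : Fin m → Fin 3 → Fin n × Bool) (β : Fin n → Bool)
    (hβ : PhiSat C β) :
    stableExt (attPsi C) (Salpha (n := n) (m := m) (extendAssign β)) ∧
    ({Arg.pos (vn1 n), Arg.neg (vn2 n)} : Set (Arg n m)) ⊆
      Salpha (n := n) (m := m) (extendAssign β) := by
  classical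
  set α := extendAssign β with hα
  have hcast : ∀ k : Fin n, α (Fin.castAdd 2 k) = β k := by
    intro k
    simp [hα, extendAssign, Fin.castAdd, k.isLt]
  have hv1 : α (vn1 n) = true := by
    simp [hα, extendAssign, vn1]
  have hv2 : α (vn2 n) = false := by
    simp [hα, extendAssign, vn2]
  have hlit : ∀ i : Fin m, ∃ j : Fin 3,
      (litArg (C i j) : Arg n m) ∈ Salpha (n := n) (m := m) α := by
    intro i
    obtain ⟨j, hj⟩ := hβ i
    refine ⟨j, ?_⟩
    cases hb : (C i j).2 <;>
      simp_all [litArg, mem_pos, mem_neg, hcast]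
  refine ⟨⟨?_, ?_⟩, ?_⟩
  · intro x hx y hy hatt
    cases hatt <;>
      simp_all [mem_psi, mem_chi, mem_pos, mem_neg, mem_c1, mem_c2]
  · intro y hy
    cases y with
    | psi => exact absurd trivial hy
    | chi => exact ⟨.psi, trivial, .psiChi⟩
    | pos i =>
      refine ⟨.neg i, ?_, .negPos i⟩
      simp only [mem_pos, mem_neg] at hy ⊢
      cases h : α i
      · rfl
      · exact absurd h hy
    | neg i =>
      refine ⟨.pos i, ?_, .posNeg i⟩
      simp only [mem_pos, mem_neg] at hy ⊢
      cases h : α i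
      · exact absurd h hy
      · rfl
    | c1 i =>
      obtain ⟨j, hj⟩ := hlit i
      exact ⟨litArg (C i j), hj, .litC1 i j⟩
    | c2 i =>
      obtain ⟨j, hj⟩ := hlit i
      exact ⟨litArg (C i j), hj, .litC2 i j⟩
  · intro a ha
    rcases ha with h | h <;> subst h
    · exact (mem_pos α _).mpr hv1
    · exact (mem_neg α _).mpr hv2
end
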